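/- arXiv:2211.15073 — 3 statements merged into one kernel-verified Lean document; each statement's English description precedes it below -/
import Mathlib

section
/- For every integer L ≥ 2 and for any set S of explicitly rigidified components in the angle-based bootstrap process on an L×L rotating-squares pattern, if the closure of S under the angle-sum rule is the full set of 2L²−2L+1 components, then |S| ≥ 4L−3. -/
/-- Components of an `L × L` rotating-squares kirigami pattern, modelled as the cells of
the `(2L−1) × (2L−1)` grid `{0,…,2L−2}²` whose two coordinates have equal parity:
tiles have both coordinates even and holes have both coordinates odd. -/
def IsComp (L : ℕ) (p : ℕ × ℕ) : Prop :=
  p.1 ≤ 2 * L - 2 ∧ p.2 ≤ 2 * L - 2 ∧ p.1 % 2 = p.2 % 2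

/-- A tile: a component with both coordinates even. -/
def IsTile (L : ℕ) (p : ℕ × ℕ) : Prop := IsComp L p ∧ p.1 % 2 = 0

/-- A hole: a component with both coordinates odd. -/
def IsHole (L : ℕ) (p : ℕ × ℕ) : Prop := IsComp L p ∧ p.1 % 2 = 1

/-- Interior nodes of the pattern: mixed-parity grid positions all four of whose
side-neighbours (two tiles and two holes, forming a `2 × 2` block of pairwise diagonally
adjacent cells) lie in the grid. -/
def IsNode (L : ℕ) (c : ℕ × ℕ) : Prop :=
  1 ≤ c.1 ∧ c.1 ≤ 2 * L - 3 ∧ 1 ≤ c.2 ∧ c.2 ≤ 2 * L - 3 ∧ ¬ c.1 % 2 = c.2 % 2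

instance (L : ℕ) : DecidablePred (IsNode L) := fun c => by unfold IsNode; infer_instance

/-- The four components (two tiles and two holes) around the node `c`. -/
def nodeBlock (c : ℕ × ℕ) : Finset (ℕ × ℕ) :=
  {(c.1 - 1, c.2), (c.1 + 1, c.2), (c.1, c.2 - 1), (c.1, c.2 + 1)}

/-- The closure of the set `S` of explicitly rigidified components under the angle-sum
rule: whenever three of the four components around an interior node are rigid, so is the
fourth. -/
inductive AngleRigid (L : ℕ) (S : Set (ℕ × ℕ)) : ℕ × ℕ → Prop
  | expl {p : ℕ × ℕ} : p ∈ S → AngleRigid L S p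
  | node {c p : ℕ × ℕ} : IsNode L c → p ∈ nodeBlock c →
      (∀ q ∈ nodeBlock c, q ≠ p → AngleRigid L S q) → AngleRigid L S p


/-!
Call `f : ℕ × ℕ → K` angle-balanced if at every interior node its values on the two tiles
add up to its values on the two holes. If a balanced `f` vanishes on `S`, then it vanishes on
every component rigidified from `S`, since three zeros around a node force the fourth. So when
`S` rigidifies the pattern, restriction to `S` is injective on balanced functions taken modulo
those vanishing on all components, and `|S|` bounds the dimension of that space. Each
`g (x + y) + h (x - y)` is balanced, and on the components these functions already form a space
of dimension `(2L - 1) + (2L - 1) - 1 = 4L - 3`: the values at the corner `(2L - 2, 0)`,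
on the main diagonal and on the main antidiagonal determine `g` and `h` up to a constant.
-/

open Function

def IsAngleBalanced {M : Type*} [Add M] (L : ℕ) (f : ℕ × ℕ → M) : Prop :=
  ∀ c, IsNode L c → f (c.1 - 1, c.2) + f (c.1 + 1, c.2) = f (c.1, c.2 - 1) + f (c.1, c.2 + 1)

theorem AngleRigid.apply_eq_zero {M : Type*} [AddZeroClass M] {L : ℕ} {S : Set (ℕ × ℕ)}
    {f : ℕ × ℕ → M} (hf : IsAngleBalanced L f) (hS : ∀ p ∈ S, f p = 0) {p : ℕ × ℕ}
    (hp : AngleRigid L S p) : f p = 0 := by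
  induction hp with
  | expl hp => exact hS _ hp
  | @node c p hc hp _ ih =>
    obtain ⟨c₁, c₂⟩ := c
    have hsum := hf _ hc
    obtain ⟨hc₁, -, hc₂, -⟩ := hc
    dsimp only at hsum hc₁ hc₂
    simp only [nodeBlock, Finset.mem_insert, Finset.mem_singleton, forall_eq_or_imp,
      forall_eq] at hp ih
    rcases hp with rfl | rfl | rfl | rfl <;> simp only [ne_eq, Prod.mk.injEq] at ih
    · rw [ih.2.1 (by omega), ih.2.2.1 (by omega), ih.2.2.2 (by omega)] at hsum
      simpa using hsum
    · rw [ih.1 (by omega), ih.2.2.1 (by omega), ih.2.2.2 (by omega)] at hsum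
      simpa using hsum
    · rw [ih.1 (by omega), ih.2.1 (by omega), ih.2.2.2 (by omega)] at hsum
      simpa using hsum.symm
    · rw [ih.1 (by omega), ih.2.1 (by omega), ih.2.2.1 (by omega)] at hsum
      simpa using hsum.symm

theorem isAngleBalanced_diagonal {M : Type*} [AddCommMonoid M] (L : ℕ) (g : ℕ → M) (h : ℤ → M) :
    IsAngleBalanced L fun p => g (p.1 + p.2) + h (p.1 - p.2 : ℤ) := by
  rintro ⟨c₁, c₂⟩ ⟨hc₁, -, hc₂, -⟩
  dsimp only at hc₁ hc₂ ⊢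
  have hs₁ : c₁ - 1 + c₂ = c₁ + (c₂ - 1) := by omega
  have hs₂ : c₁ + 1 + c₂ = c₁ + (c₂ + 1) := by omega
  have hd₁ : ((c₁ - 1 : ℕ) - c₂ : ℤ) = c₁ - (c₂ + 1 : ℕ) := by omega
  have hd₂ : ((c₁ + 1 : ℕ) - c₂ : ℤ) = c₁ - (c₂ - 1 : ℕ) := by omega
  rw [hs₁, hs₂, hd₁, hd₂]
  abel

theorem eq_zero_of_sum_diff_eq_zero {M : Type*} [AddZeroClass M] {n : ℕ} {g : ℕ → M} {h : ℤ → M}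
    (hgh : ∀ x y, x ≤ 2 * n → y ≤ 2 * n → x % 2 = y % 2 → g (x + y) + h (x - y : ℤ) = 0)
    (hcorner : h (2 * n) = 0) :
    (∀ t ≤ 2 * n, g (2 * t) = 0) ∧ ∀ t ≤ 2 * n, h (2 * t - 2 * n) = 0 := by
  have hg : g (2 * n) = 0 := by
    simpa [hcorner] using hgh (2 * n) 0 le_rfl (Nat.zero_le _) (by simp)
  have h0 : h 0 = 0 := by
    simpa [← two_mul, hg] using hgh n n (by omega) (by omega) rfl
  refine ⟨fun t ht => by simpa [h0, two_mul] using hgh t t ht ht rfl, fun t ht => ?_⟩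
  have := hgh t (2 * n - t) ht (by omega) (by omega)
  rwa [Nat.add_sub_cancel' ht, hg, zero_add, Nat.cast_sub ht, Nat.cast_mul, Nat.cast_ofNat,
    sub_sub_eq_add_sub, ← two_mul] at this

open LinearMap in
/-- `x = (a, b)` encodes `p ↦ g (p.1 + p.2) + h (p.1 - p.2)`, with `g` given by its values
`a t` at the even sums `2t ≤ 4n` and `h` by its values `b t` at the even differences
`2t - 2n < 2n`; the difference `2n` is left out since `(g + c, h - c)` gives the same function. -/
noncomputable def diagonalMap (K : Type*) [Semiring K] (n : ℕ) :
    ((Fin (2 * n + 1) → K) × (Fin (2 * n) → K)) →ₗ[K] ℕ × ℕ → K :=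
  (funLeft K K (fun p : ℕ × ℕ => p.1 + p.2) ∘ₗ
      ExtendByZero.linearMap K fun t : Fin (2 * n + 1) => 2 * (t : ℕ)).coprod
    (funLeft K K (fun p : ℕ × ℕ => (p.1 - p.2 : ℤ)) ∘ₗ
      ExtendByZero.linearMap K fun t : Fin (2 * n) => 2 * (t : ℤ) - 2 * n)

theorem diagonalMap_apply {K : Type*} [Semiring K] (n : ℕ)
    (x : (Fin (2 * n + 1) → K) × (Fin (2 * n) → K)) (p : ℕ × ℕ) :
    diagonalMap K n x p = extend (fun t : Fin (2 * n + 1) => 2 * (t : ℕ)) x.1 0 (p.1 + p.2)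
      + extend (fun t : Fin (2 * n) => 2 * (t : ℤ) - 2 * n) x.2 0 (p.1 - p.2 : ℤ) :=
  rfl

theorem isAngleBalanced_diagonalMap {K : Type*} [Semiring K] (L n : ℕ)
    (x : (Fin (2 * n + 1) → K) × (Fin (2 * n) → K)) : IsAngleBalanced L (diagonalMap K n x) := by
  rw [show diagonalMap K n x = _ from funext (diagonalMap_apply n x)]
  exact isAngleBalanced_diagonal L _ _

theorem diagonalMap_eq_zero {K : Type*} [Semiring K] {n : ℕ}
    {x : (Fin (2 * n + 1) → K) × (Fin (2 * n) → K)}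
    (hx : ∀ p : ℕ × ℕ, p.1 ≤ 2 * n → p.2 ≤ 2 * n → p.1 % 2 = p.2 % 2 → diagonalMap K n x p = 0) :
    x = 0 := by
  have he₁ : Injective fun t : Fin (2 * n + 1) => 2 * (t : ℕ) := by
    intro s t hst; ext; simpa using hst
  have he₂ : Injective fun t : Fin (2 * n) => 2 * (t : ℤ) - 2 * n := by
    intro s t hst; ext; simpa using hst
  obtain ⟨hg, hh⟩ := eq_zero_of_sum_diff_eq_zero
    (fun a b ha hb hab => diagonalMap_apply n x (a, b) ▸ hx (a, b) ha hb hab)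
    (extend_apply' _ _ _ (by rintro ⟨t, ht⟩; have := t.isLt; omega))
  ext t
  · simpa [he₁.extend_apply] using hg t (by omega)
  · simpa [he₂.extend_apply] using hh t (by omega)

theorem finrank_le_card_of_angleRigid {K E : Type*} [Ring K] [StrongRankCondition K]
    [AddCommGroup E] [Module K E] {L : ℕ} {S : Finset (ℕ × ℕ)} (Φ : E →ₗ[K] ℕ × ℕ → K)
    (hΦ : ∀ x, IsAngleBalanced L (Φ x)) (hΦ₀ : ∀ x, (∀ p, IsComp L p → Φ x p = 0) → x = 0)
    (hrigid : ∀ p, IsComp L p → AngleRigid L S p) :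
    Module.finrank K E ≤ S.card := by
  have hinj : Injective (LinearMap.funLeft K K ((↑) : S → ℕ × ℕ) ∘ₗ Φ) := by
    refine (injective_iff_map_eq_zero _).2 fun x hx => hΦ₀ x fun p hp => ?_
    exact (hrigid p hp).apply_eq_zero (hΦ x) fun q hq => congrFun hx ⟨q, hq⟩
  simpa using LinearMap.finrank_le_finrank_of_injective hinj

theorem angle_lower_bound_general (L : ℕ) (S : Finset (ℕ × ℕ))
    (hrigid : ∀ p, IsComp L p → AngleRigid L (↑S) p) :
    4 * L - 3 ≤ S.card := by
  have h := finrank_le_card_of_angleRigid (diagonalMap ℚ (L - 1))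
    (isAngleBalanced_diagonalMap L (L - 1))
    (fun x hx => diagonalMap_eq_zero fun p h₁ h₂ h₃ => hx p ⟨by omega, by omega, h₃⟩) hrigid
  simp only [Module.finrank_prod, Module.finrank_fin_fun] at h
  omega

/-- For every `L ≥ 2`, any set `S` of components of the `L × L` rotating-squares pattern
whose closure under the angle-sum rule is the full set of `2L² − 2L + 1` components
satisfies `|S| ≥ 4L − 3`. -/
theorem angle_lower_bound (L : ℕ) (hL : 2 ≤ L) (S : Finset (ℕ × ℕ))
    (hS : ∀ p ∈ S, IsComp L p)
    (hrigid : ∀ p, IsComp L p → AngleRigid L (↑S) p) :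
    4 * L - 3 ≤ S.card :=
  angle_lower_bound_general L S hrigid
end

section
/- For every integer L ≥ 2, there exists a set S of exactly 4L−3 components in an L×L rotating-squares pattern whose closure under the angle-sum rule is the full set of components; hence the minimum number of steps needed to rigidify the pattern in the angle-based method is exactly 4L−3. -/
lemma node_up {L : ℕ} {S : Set (ℕ × ℕ)} {x y : ℕ} (hc : IsNode L (x+1, y+1))
    (h1 : AngleRigid L S (x, y+1)) (h2 : AngleRigid L S (x+2, y+1))
    (h3 : AngleRigid L S (x+1, y)) : AngleRigid L S (x+1, y+2) := by
  refine AngleRigid.node hc ?_ ?_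
  · simp [nodeBlock, Prod.ext_iff]
  · intro q hq hne
    simp only [nodeBlock, Finset.mem_insert, Finset.mem_singleton] at hq
    rcases hq with rfl | rfl | rfl | rfl
    · exact h1
    · exact h2
    · exact h3
    · exact absurd rfl hne

lemma node_right {L : ℕ} {S : Set (ℕ × ℕ)} {x y : ℕ} (hc : IsNode L (x+1, y+1))
    (h1 : AngleRigid L S (x, y+1)) (h2 : AngleRigid L S (x+1, y))
    (h3 : AngleRigid L S (x+1, y+2)) : AngleRigid L S (x+2, y+1) := by
  refine AngleRigid.node hc ?_ ?_
  · simp [nodeBlock, Prod.ext_iff]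
  · intro q hq hne
    simp only [nodeBlock, Finset.mem_insert, Finset.mem_singleton] at hq
    rcases hq with rfl | rfl | rfl | rfl
    · exact h1
    · exact absurd rfl hne
    · exact h2
    · exact h3
def startSet (L : ℕ) : Finset (ℕ × ℕ) :=
  ((Finset.range L).image fun a => (2*a, 0)) ∪
  ((Finset.range L).image fun a => (2*a, 2)) ∪
  ((Finset.Icc 2 (L-1)).image fun b => (0, 2*b)) ∪
  ((Finset.Icc 2 (L-1)).image fun b => (2*L-2, 2*b)) ∪
  {(1,1)}


lemma mem1 {L a : ℕ} (ha : a < L) : (2*a, 0) ∈ startSet L := by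
  unfold startSet
  simp only [Finset.mem_union, Finset.mem_image, Finset.mem_range]
  exact Or.inl (Or.inl (Or.inl (Or.inl ⟨a, ha, rfl⟩)))

lemma mem2 {L a : ℕ} (ha : a < L) : (2*a, 2) ∈ startSet L := by
  unfold startSet
  simp only [Finset.mem_union, Finset.mem_image, Finset.mem_range]
  exact Or.inl (Or.inl (Or.inl (Or.inr ⟨a, ha, rfl⟩)))

lemma mem3 {L b : ℕ} (h2 : 2 ≤ b) (hb : b ≤ L-1) : (0, 2*b) ∈ startSet L := by
  unfold startSet
  simp only [Finset.mem_union, Finset.mem_image, Finset.mem_Icc]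
  exact Or.inl (Or.inl (Or.inr ⟨b, ⟨h2, hb⟩, rfl⟩))

lemma mem4 {L b : ℕ} (h2 : 2 ≤ b) (hb : b ≤ L-1) : (2*L-2, 2*b) ∈ startSet L := by
  unfold startSet
  simp only [Finset.mem_union, Finset.mem_image, Finset.mem_Icc]
  exact Or.inl (Or.inr ⟨b, ⟨h2, hb⟩, rfl⟩)

lemma mem5 {L : ℕ} : ((1,1) : ℕ × ℕ) ∈ startSet L := by
  unfold startSet
  simp

lemma startSet_comp {L : ℕ} (hL : 2 ≤ L) : ∀ p ∈ startSet L, IsComp L p := by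
  intro p hp
  unfold startSet at hp
  simp only [Finset.mem_union, Finset.mem_image, Finset.mem_range, Finset.mem_Icc,
    Finset.mem_singleton] at hp
  rcases hp with (((⟨a, ha, rfl⟩ | ⟨a, ha, rfl⟩) | ⟨b, hb, rfl⟩) | ⟨b, hb, rfl⟩) | rfl <;>
    refine ⟨?_, ?_, ?_⟩ <;> simp <;> omega

-- tiles of columns b and b+1 and holes of column b are rigid
lemma claim {L : ℕ} (hL : 2 ≤ L) : ∀ b, b + 1 ≤ L - 1 →
    (∀ a < L, AngleRigid L (↑(startSet L)) (2*a, 2*b)) ∧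
    (∀ a < L, AngleRigid L (↑(startSet L)) (2*a, 2*(b+1))) ∧
    (∀ a < L - 1, AngleRigid L (↑(startSet L)) (2*a+1, 2*b+1)) := by
  have H0 : ∀ a < L - 1, AngleRigid L (↑(startSet L)) (2*a+1, 1) := by
    intro a
    induction a with
    | zero => intro _; exact AngleRigid.expl (by exact_mod_cast mem5)
    | succ a ih =>
      intro ha
      have hnode : IsNode L (2*a+2, 1) := by
        refine ⟨by omega, by omega, by omega, by omega, by omega⟩
      have h := node_right (x := 2*a+1) (y := 0) hnode (ih (by omega))
        (AngleRigid.expl (show (2*a+1+1, 0) ∈ (↑(startSet L) : Set (ℕ×ℕ)) by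
          have : (2*(a+1), 0) ∈ startSet L := mem1 (by omega)
          simpa [Nat.mul_succ, Nat.mul_add] using this))
        (AngleRigid.expl (show (2*a+1+1, 2) ∈ (↑(startSet L) : Set (ℕ×ℕ)) by
          have : (2*(a+1), 2) ∈ startSet L := mem2 (by omega)
          simpa [Nat.mul_succ, Nat.mul_add] using this))
      have e : 2*(a+1)+1 = 2*a+1+2 := by omega
      rw [show ((2*(a+1)+1, 1) : ℕ×ℕ) = (2*a+1+2, 1) by rw [e]]
      exact h
  intro b
  induction b with
  | zero =>
    intro _
    refine ⟨?_, ?_, ?_⟩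
    · intro a ha
      exact AngleRigid.expl (by exact_mod_cast mem1 ha)
    · intro a ha
      have : (2*a, 2) ∈ startSet L := mem2 ha
      exact AngleRigid.expl (by norm_num; exact_mod_cast this)
    · intro a ha
      have := H0 a ha
      simpa using this
  | succ b ih =>
    intro hb1
    obtain ⟨hT, hT1, hH⟩ := ih (by omega)
    have hH1 : ∀ a < L - 1, AngleRigid L (↑(startSet L)) (2*a+1, 2*(b+1)+1) := by
      intro a ha
      have hnode : IsNode L (2*a+1, 2*(b+1)) := by
        refine ⟨by omega, by omega, by omega, by omega, by omega⟩
      have h := node_up (x := 2*a) (y := 2*(b+1)-1)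
        (by rw [show 2*(b+1)-1+1 = 2*(b+1) by omega]; exact hnode)
        (by rw [show 2*(b+1)-1+1 = 2*(b+1) by omega]; exact hT1 a (by omega))
        (by rw [show 2*(b+1)-1+1 = 2*(b+1) by omega]
            rw [show 2*a+2 = 2*(a+1) by omega]; exact hT1 (a+1) (by omega))
        (by rw [show 2*(b+1)-1 = 2*b+1 by omega]; exact hH a ha)
      rw [show 2*(b+1)+1 = 2*(b+1)-1+2 by omega]
      exact h
    refine ⟨hT1, ?_, hH1⟩
    intro a ha
    rcases Nat.eq_zero_or_pos a with rfl | hapos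
    · exact AngleRigid.expl (by
        have : (0, 2*(b+2)) ∈ startSet L := mem3 (by omega) (by omega)
        norm_num at this ⊢
        exact_mod_cast this)
    rcases eq_or_lt_of_le (Nat.succ_le_of_lt ha) with haL | haL
    · -- a = L - 1
      have haeq : a = L - 1 := by omega
      subst haeq
      exact AngleRigid.expl (by
        have : (2*L-2, 2*(b+2)) ∈ startSet L := mem4 (by omega) (by omega)
        rw [show 2*(L-1) = 2*L-2 by omega]
        exact_mod_cast this)
    · -- 1 ≤ a ≤ L - 2
      obtain ⟨a', rfl⟩ : ∃ a', a = a' + 1 := ⟨a - 1, by omega⟩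
      have hnode : IsNode L (2*(a'+1), 2*(b+1)+1) := by
        refine ⟨by omega, by omega, by omega, by omega, by omega⟩
      have h := node_up (x := 2*(a'+1)-1) (y := 2*(b+1))
        (by rw [show 2*(a'+1)-1+1 = 2*(a'+1) by omega]; exact hnode)
        (by rw [show 2*(a'+1)-1 = 2*a'+1 by omega]; exact hH1 a' (by omega))
        (by rw [show 2*(a'+1)-1+2 = 2*(a'+1)+1 by omega]; exact hH1 (a'+1) (by omega))
        (by rw [show 2*(a'+1)-1+1 = 2*(a'+1) by omega]; exact hT1 (a'+1) ha)
      rw [show ((2*(a'+1), 2*(b+1+1)) : ℕ×ℕ) = (2*(a'+1)-1+1, 2*(b+1)+2) by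
        simp only [Prod.mk.injEq]; omega]
      exact h

lemma startSet_card {L : ℕ} (hL : 2 ≤ L) : (startSet L).card = 4*L-3 := by
  have inj1 : Function.Injective (fun a : ℕ => ((2*a, 0) : ℕ × ℕ)) := by
    intro x y h; simp only [Prod.mk.injEq] at h; omega
  have inj2 : Function.Injective (fun a : ℕ => ((2*a, 2) : ℕ × ℕ)) := by
    intro x y h; simp only [Prod.mk.injEq] at h; omega
  have inj3 : Function.Injective (fun b : ℕ => ((0, 2*b) : ℕ × ℕ)) := by
    intro x y h; simp only [Prod.mk.injEq] at h; omega
  have inj4 : Function.Injective (fun b : ℕ => ((2*L-2, 2*b) : ℕ × ℕ)) := by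
    intro x y h; simp only [Prod.mk.injEq] at h; omega
  have d1 : Disjoint ((Finset.range L).image fun a => ((2*a, 0) : ℕ × ℕ))
      ((Finset.range L).image fun a => ((2*a, 2) : ℕ × ℕ)) := by
    rw [Finset.disjoint_left]
    rintro p hp hq
    simp only [Finset.mem_image, Finset.mem_range] at hp hq
    obtain ⟨a, _, rfl⟩ := hp
    obtain ⟨b, _, hb⟩ := hq
    simp only [Prod.mk.injEq] at hb; omega
  have d2 : Disjoint (((Finset.range L).image fun a => ((2*a, 0) : ℕ × ℕ)) ∪
      ((Finset.range L).image fun a => ((2*a, 2) : ℕ × ℕ)))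
      ((Finset.Icc 2 (L-1)).image fun b => ((0, 2*b) : ℕ × ℕ)) := by
    rw [Finset.disjoint_left]
    rintro p hp hq
    simp only [Finset.mem_union, Finset.mem_image, Finset.mem_range, Finset.mem_Icc] at hp hq
    obtain ⟨b, hb, rfl⟩ := hq
    rcases hp with ⟨a, _, ha⟩ | ⟨a, _, ha⟩ <;> simp only [Prod.mk.injEq] at ha <;> omega
  have d3 : Disjoint ((((Finset.range L).image fun a => ((2*a, 0) : ℕ × ℕ)) ∪
      ((Finset.range L).image fun a => ((2*a, 2) : ℕ × ℕ))) ∪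
      ((Finset.Icc 2 (L-1)).image fun b => ((0, 2*b) : ℕ × ℕ)))
      ((Finset.Icc 2 (L-1)).image fun b => ((2*L-2, 2*b) : ℕ × ℕ)) := by
    rw [Finset.disjoint_left]
    rintro p hp hq
    simp only [Finset.mem_union, Finset.mem_image, Finset.mem_range, Finset.mem_Icc] at hp hq
    obtain ⟨b, hb, rfl⟩ := hq
    rcases hp with (⟨a, _, ha⟩ | ⟨a, _, ha⟩) | ⟨a, ha', ha⟩ <;>
      simp only [Prod.mk.injEq] at ha <;> omega
  have d4 : Disjoint (((((Finset.range L).image fun a => ((2*a, 0) : ℕ × ℕ)) ∪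
      ((Finset.range L).image fun a => ((2*a, 2) : ℕ × ℕ))) ∪
      ((Finset.Icc 2 (L-1)).image fun b => ((0, 2*b) : ℕ × ℕ))) ∪
      ((Finset.Icc 2 (L-1)).image fun b => ((2*L-2, 2*b) : ℕ × ℕ)))
      ({((1,1) : ℕ × ℕ)}) := by
    rw [Finset.disjoint_left]
    rintro p hp hq
    simp only [Finset.mem_singleton] at hq
    subst hq
    simp only [Finset.mem_union, Finset.mem_image, Finset.mem_range, Finset.mem_Icc] at hp
    rcases hp with ((⟨a, _, ha⟩ | ⟨a, _, ha⟩) | ⟨a, _, ha⟩) | ⟨a, _, ha⟩ <;>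
      simp only [Prod.mk.injEq] at ha <;> omega
  unfold startSet
  rw [Finset.card_union_of_disjoint d4, Finset.card_union_of_disjoint d3,
    Finset.card_union_of_disjoint d2, Finset.card_union_of_disjoint d1,
    Finset.card_image_of_injective _ inj1, Finset.card_image_of_injective _ inj2,
    Finset.card_image_of_injective _ inj3, Finset.card_image_of_injective _ inj4]
  simp [Nat.card_Icc]
  omega

def Rstage (L : ℕ) (S : Set (ℕ × ℕ)) : ℕ → Set (ℕ × ℕ)
  | 0 => S
  | n+1 => Rstage L S n ∪ {p | ∃ c, IsNode L c ∧ p ∈ nodeBlock c ∧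
      ∀ q ∈ nodeBlock c, q ≠ p → q ∈ Rstage L S n}

lemma Rstage_mono {L : ℕ} {S : Set (ℕ × ℕ)} {m n : ℕ} (h : m ≤ n) :
    Rstage L S m ⊆ Rstage L S n := by
  induction n with
  | zero => simp_all
  | succ n ih =>
    rcases Nat.eq_or_lt_of_le h with rfl | h'
    · exact subset_rfl
    · exact (ih (by omega)).trans (Set.subset_union_left)

lemma exists_common_stage {L : ℕ} {S : Set (ℕ × ℕ)} {p : ℕ × ℕ} :
    ∀ (F : Finset (ℕ × ℕ)), (∀ q ∈ F, q ≠ p → ∃ n, q ∈ Rstage L S n) →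
    ∃ N, ∀ q ∈ F, q ≠ p → q ∈ Rstage L S N := by
  intro F
  induction F using Finset.induction with
  | empty => intro _; exact ⟨0, by simp⟩
  | @insert r F hr ihF =>
    intro h
    obtain ⟨N1, hN1⟩ := ihF (fun q hq => h q (Finset.mem_insert_of_mem hq))
    by_cases hrp : r = p
    · refine ⟨N1, ?_⟩
      intro q hq hqp
      rcases Finset.mem_insert.mp hq with rfl | hq'
      · exact absurd hrp hqp
      · exact hN1 q hq' hqp
    · obtain ⟨N2, hN2⟩ := h r (Finset.mem_insert_self r F) hrp
      refine ⟨max N1 N2, ?_⟩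
      intro q hq hqp
      rcases Finset.mem_insert.mp hq with rfl | hq'
      · exact Rstage_mono (le_max_right _ _) hN2
      · exact Rstage_mono (le_max_left _ _) (hN1 q hq' hqp)

lemma rigid_to_stage {L : ℕ} {S : Set (ℕ × ℕ)} {p : ℕ × ℕ}
    (h : AngleRigid L S p) : ∃ n, p ∈ Rstage L S n := by
  induction h with
  | expl hp => exact ⟨0, hp⟩
  | @node c p hc hp _ ih =>
    obtain ⟨N, hN⟩ := exists_common_stage (nodeBlock c) ih
    exact ⟨N + 1, Or.inr ⟨c, hc, hp, hN⟩⟩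

lemma stage_to_rigid {L : ℕ} {S : Set (ℕ × ℕ)} {p : ℕ × ℕ} {n : ℕ}
    (h : p ∈ Rstage L S n) : AngleRigid L S p := by
  induction n generalizing p with
  | zero => exact AngleRigid.expl h
  | succ n ih =>
    rcases h with h | ⟨c, hc, hp, hq⟩
    · exact ih h
    · exact AngleRigid.node hc hp (fun q hq' hqp => ih (hq q hq' hqp))

def compSet (L : ℕ) : Finset (ℕ × ℕ) :=
  (((Finset.range L) ×ˢ (Finset.range L)).image fun ab => (2*ab.1, 2*ab.2)) ∪
  (((Finset.range (L-1)) ×ˢ (Finset.range (L-1))).image fun ab => (2*ab.1+1, 2*ab.2+1))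

def nodeSet (L : ℕ) : Finset (ℕ × ℕ) :=
  (((Finset.range (L-1)) ×ˢ (Finset.Icc 1 (L-2))).image fun ab => (2*ab.1+1, 2*ab.2)) ∪
  (((Finset.Icc 1 (L-2)) ×ˢ (Finset.range (L-1))).image fun ab => (2*ab.1, 2*ab.2+1))


lemma mem_compSet {L : ℕ} (hL : 2 ≤ L) {p : ℕ × ℕ} (hp : IsComp L p) : p ∈ compSet L := by
  obtain ⟨i, j⟩ := p
  obtain ⟨h1, h2, h3⟩ := hp
  simp only at h1 h2 h3
  simp only [compSet, Finset.mem_union, Finset.mem_image, Finset.mem_product,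
    Finset.mem_range, Prod.exists]
  rcases Nat.mod_two_eq_zero_or_one i with hi | hi
  · exact Or.inl ⟨i/2, j/2, ⟨by omega, by omega⟩, by
      simp only [Prod.mk.injEq]; omega⟩
  · exact Or.inr ⟨i/2, j/2, ⟨by omega, by omega⟩, by
      simp only [Prod.mk.injEq]; omega⟩

lemma mem_nodeSet {L : ℕ} (hL : 2 ≤ L) {c : ℕ × ℕ} (hc : IsNode L c) : c ∈ nodeSet L := by
  obtain ⟨i, j⟩ := c
  obtain ⟨h1, h2, h3, h4, h5⟩ := hc
  simp only at h1 h2 h3 h4 h5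
  simp only [nodeSet, Finset.mem_union, Finset.mem_image, Finset.mem_product,
    Finset.mem_range, Finset.mem_Icc, Prod.exists]
  rcases Nat.mod_two_eq_zero_or_one i with hi | hi
  · exact Or.inr ⟨i/2, j/2, ⟨⟨by omega, by omega⟩, by omega⟩, by
      simp only [Prod.mk.injEq]; omega⟩
  · exact Or.inl ⟨i/2, j/2, ⟨by omega, ⟨by omega, by omega⟩⟩, by
      simp only [Prod.mk.injEq]; omega⟩

lemma compSet_card {L : ℕ} (hL : 2 ≤ L) : (compSet L).card = L*L + (L-1)*(L-1) := by
  have inj1 : Set.InjOn (fun ab : ℕ × ℕ => ((2*ab.1, 2*ab.2) : ℕ × ℕ))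
      ↑((Finset.range L) ×ˢ (Finset.range L)) := by
    intro x _ y _ h; simp only [Prod.mk.injEq] at h; exact Prod.ext (by omega) (by omega)
  have inj2 : Set.InjOn (fun ab : ℕ × ℕ => ((2*ab.1+1, 2*ab.2+1) : ℕ × ℕ))
      ↑((Finset.range (L-1)) ×ˢ (Finset.range (L-1))) := by
    intro x _ y _ h; simp only [Prod.mk.injEq] at h; exact Prod.ext (by omega) (by omega)
  have d : Disjoint (((Finset.range L) ×ˢ (Finset.range L)).image
        fun ab => ((2*ab.1, 2*ab.2) : ℕ × ℕ))
      (((Finset.range (L-1)) ×ˢ (Finset.range (L-1))).image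
        fun ab => ((2*ab.1+1, 2*ab.2+1) : ℕ × ℕ)) := by
    rw [Finset.disjoint_left]
    rintro p hp hq
    simp only [Finset.mem_image, Finset.mem_product, Finset.mem_range, Prod.exists] at hp hq
    obtain ⟨a, b, _, rfl⟩ := hp
    obtain ⟨a', b', _, h⟩ := hq
    simp only [Prod.mk.injEq] at h; omega
  rw [compSet, Finset.card_union_of_disjoint d, Finset.card_image_of_injOn inj1,
    Finset.card_image_of_injOn inj2, Finset.card_product, Finset.card_product]
  simp

lemma nodeSet_card {L : ℕ} : (nodeSet L).card ≤ 2*((L-1)*(L-2)) := by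
  refine (Finset.card_union_le _ _).trans ?_
  have h1 := Finset.card_image_le (s := (Finset.range (L-1)) ×ˢ (Finset.Icc 1 (L-2)))
    (f := fun ab => ((2*ab.1+1, 2*ab.2) : ℕ × ℕ))
  have h2 := Finset.card_image_le (s := (Finset.Icc 1 (L-2)) ×ˢ (Finset.range (L-1)))
    (f := fun ab => ((2*ab.1, 2*ab.2+1) : ℕ × ℕ))
  simp only [Finset.card_product, Finset.card_range, Nat.card_Icc] at h1 h2
  have e : L-2+1-1 = L-2 := by omega
  rw [e] at h1 h2
  have e2 : (L-2)*(L-1) = (L-1)*(L-2) := Nat.mul_comm _ _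
  rw [e2] at h2
  omega

lemma comp_of_mem_compSet {L : ℕ} (hL : 2 ≤ L) {p : ℕ × ℕ} (hp : p ∈ compSet L) :
    IsComp L p := by
  simp only [compSet, Finset.mem_union, Finset.mem_image, Finset.mem_product,
    Finset.mem_range, Prod.exists] at hp
  rcases hp with ⟨a, b, ⟨ha, hb⟩, rfl⟩ | ⟨a, b, ⟨ha, hb⟩, rfl⟩ <;>
    exact ⟨by dsimp only; omega, by dsimp only; omega, by dsimp only; omega⟩

lemma lower_bound {L : ℕ} (hL : 2 ≤ L) (S : Finset (ℕ × ℕ))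
    (hfull : ∀ p, IsComp L p → AngleRigid L (↑S) p) : 4*L-3 ≤ S.card := by
  classical
  set stage : ℕ × ℕ → ℕ := fun p => sInf {n | p ∈ Rstage L (↑S) n} with hstage
  have key : ∀ p ∈ compSet L \ S, ∃ c, IsNode L c ∧ p ∈ nodeBlock c ∧
      ∀ q ∈ nodeBlock c, q ≠ p → stage q < stage p := by
    intro p hp
    rw [Finset.mem_sdiff] at hp
    obtain ⟨hpc, hps⟩ := hp
    have hne : {n | p ∈ Rstage L (↑S) n}.Nonempty :=
      rigid_to_stage (hfull p (comp_of_mem_compSet hL hpc))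
    have hmem : p ∈ Rstage L (↑S) (stage p) := Nat.sInf_mem hne
    have hpos : stage p ≠ 0 := by
      intro h0
      rw [h0] at hmem
      exact hps hmem
    obtain ⟨m, hm⟩ : ∃ m, stage p = m + 1 := ⟨stage p - 1, by omega⟩
    have hnotm : p ∉ Rstage L (↑S) m := by
      intro hmm
      have h' : stage p ≤ m := Nat.sInf_le (show m ∈ {n | p ∈ Rstage L (↑S) n} from hmm)
      omega
    rw [hm] at hmem
    rcases hmem with hmem | ⟨c, hc, hpb, hq⟩
    · exact absurd hmem hnotm
    · refine ⟨c, hc, hpb, ?_⟩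
      intro q hq' hqp
      have h' : stage q ≤ m := Nat.sInf_le (show m ∈ {n | q ∈ Rstage L (↑S) n} from hq q hq' hqp)
      omega
  choose f hf1 hf2 hf3 using key
  have hinj : Set.InjOn (fun p => if h : p ∈ compSet L \ S then f p h else p)
      ↑(compSet L \ S) := by
    intro p hp q hq hfpq
    simp only [Finset.mem_coe] at hp hq
    simp only at hfpq
    rw [dif_pos hp, dif_pos hq] at hfpq
    by_contra hne
    have h1 : stage q < stage p := hf3 p hp q (by rw [hfpq]; exact hf2 q hq) (Ne.symm hne)
    have h2 : stage p < stage q := hf3 q hq p (by rw [← hfpq]; exact hf2 p hp) hne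
    omega
  have hcard1 : (compSet L \ S).card ≤ (nodeSet L).card := by
    refine Finset.card_le_card_of_injOn _ ?_ hinj
    intro p hp
    dsimp only
    rw [dif_pos (Finset.mem_coe.mp hp)]
    exact mem_nodeSet hL (hf1 p hp)
  have hcard2 : (compSet L).card ≤ (compSet L \ S).card + S.card :=
    Finset.card_le_card_sdiff_add_card
  rw [compSet_card hL] at hcard2
  have hcard3 := nodeSet_card (L := L)
  obtain ⟨m, rfl⟩ : ∃ m, L = m + 2 := ⟨L - 2, by omega⟩
  have e1 : (m+2)*(m+2) + (m+2-1)*(m+2-1) = 2*((m+2-1)*(m+2-2)) + (4*m+5) := by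
    have : m+2-1 = m+1 := by omega
    rw [this]
    have : m+2-2 = m := by omega
    rw [this]
    ring
  have e2 : 4*(m+2)-3 = 4*m+5 := by omega
  omega


/-- For every `L ≥ 2`, there is a set of exactly `4L − 3` components of the `L × L`
rotating-squares pattern whose closure under the angle-sum rule is the full set of
components; combined with the lower bound, the minimum number of steps needed to
rigidify the pattern in the angle-based method is exactly `4L − 3`. -/
theorem angle_min_is_4L_sub_3 (L : ℕ) (hL : 2 ≤ L) :
    IsLeast {n : ℕ | ∃ S : Finset (ℕ × ℕ), (∀ p ∈ S, IsComp L p) ∧ S.card = n ∧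
      ∀ p, IsComp L p → AngleRigid L (↑S) p} (4 * L - 3) := by
  constructor
  · refine ⟨startSet L, startSet_comp hL, ?_, ?_⟩
    · rw [startSet_card hL]
    · intro p hp
      obtain ⟨i, j⟩ := p
      obtain ⟨h1, h2, h3⟩ := hp
      simp only at h1 h2 h3
      rcases Nat.mod_two_eq_zero_or_one i with hi | hi
      · obtain ⟨a, rfl⟩ : ∃ a, i = 2*a := ⟨i/2, by omega⟩
        obtain ⟨b, rfl⟩ : ∃ b, j = 2*b := ⟨j/2, by omega⟩
        rcases le_or_gt (b+1) (L-1) with hb | hb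
        · exact (claim hL b hb).1 a (by omega)
        · have hbe : b = (L-2)+1 := by omega
          subst hbe
          exact (claim hL (L-2) (by omega)).2.1 a (by omega)
      · obtain ⟨a, rfl⟩ : ∃ a, i = 2*a+1 := ⟨i/2, by omega⟩
        obtain ⟨b, rfl⟩ : ∃ b, j = 2*b+1 := ⟨j/2, by omega⟩
        exact (claim hL b (by omega)).2.2 a (by omega)
  · rintro n ⟨S, hS1, rfl, hS3⟩
    exact lower_bound hL S hS3
end

section
/- In the angle-based bootstrap process on an L×L rotating-squares pattern (L ≥ 2), the four corner tiles are never in the closure of any set S that does not contain them; i.e., corner tiles must always be explicitly rigidified. -/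
theorem AngleRigid.mem_of_forall_notMem_nodeBlock {L : ℕ} {S : Set (ℕ × ℕ)} {p : ℕ × ℕ}
    (hp : ∀ c, IsNode L c → p ∉ nodeBlock c) (h : AngleRigid L S p) : p ∈ S := by
  cases h with
  | expl hpS => exact hpS
  | node hc hpc _ => exact absurd hpc (hp _ hc)

theorem eq_fst_or_eq_snd_of_mem_nodeBlock {c q : ℕ × ℕ} (hq : q ∈ nodeBlock c) :
    q.1 = c.1 ∨ q.2 = c.2 := by
  simp only [nodeBlock, Finset.mem_insert, Finset.mem_singleton] at hq
  rcases hq with rfl | rfl | rfl | rfl <;> simp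

/-- A component around a node shares a coordinate with it, and node coordinates lie in
`[1, 2L - 3]`, strictly inside the boundary values `0` and `2L - 2`. -/
theorem notMem_nodeBlock_of_isNode {L : ℕ} {c p : ℕ × ℕ} (hc : IsNode L c)
    (hp₁ : p.1 = 0 ∨ p.1 = 2 * L - 2) (hp₂ : p.2 = 0 ∨ p.2 = 2 * L - 2) :
    p ∉ nodeBlock c := by
  obtain ⟨h₁, h₂, h₃, h₄, -⟩ := hc
  intro hp
  rcases eq_fst_or_eq_snd_of_mem_nodeBlock hp with h | h <;> omega

theorem corner_tiles_never_implicit_general (L : ℕ) (S : Set (ℕ × ℕ))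
    (p : ℕ × ℕ)
    (hp : p ∈ ({(0, 0), (0, 2 * L - 2), (2 * L - 2, 0), (2 * L - 2, 2 * L - 2)} :
      Set (ℕ × ℕ)))
    (hpS : p ∉ S) : ¬ AngleRigid L S p := by
  have hp₁ : p.1 = 0 ∨ p.1 = 2 * L - 2 := by
    rcases hp with rfl | rfl | rfl | rfl <;> simp
  have hp₂ : p.2 = 0 ∨ p.2 = 2 * L - 2 := by
    rcases hp with rfl | rfl | rfl | rfl <;> simp
  exact fun h => hpS <| h.mem_of_forall_notMem_nodeBlock fun _ hc =>
    notMem_nodeBlock_of_isNode hc hp₁ hp₂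

/-- In the angle-based bootstrap process on an `L × L` rotating-squares pattern
(`L ≥ 2`), a corner tile is never in the closure of a set `S` not containing it:
corner tiles must always be explicitly rigidified. -/
theorem corner_tiles_never_implicit (L : ℕ) (hL : 2 ≤ L) (S : Set (ℕ × ℕ))
    (p : ℕ × ℕ)
    (hp : p ∈ ({(0, 0), (0, 2 * L - 2), (2 * L - 2, 0), (2 * L - 2, 2 * L - 2)} :
      Set (ℕ × ℕ)))
    (hpS : p ∉ S) : ¬ AngleRigid L S p :=
  corner_tiles_never_implicit_general L S p hp hpS
end
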